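/- arXiv:1509.04335 — 8 statements merged into one kernel-verified Lean document; each statement's English description precedes it below -/
import Mathlib

section
/- Let X and Y be nonempty finite types. Let K₁, K₂ : Matrix X Y ℝ be row-stochastic matrices, and suppose K₂ is a degraded version of K₁, i.e., there is a row-stochastic matrix W : Matrix Y Y ℝ with K₂ = K₁ * W. Let 0 ≤ p₂ ≤ p₁ ≤ 1, and for p ∈ [0,1] define the state-augmented channel N_p : Matrix X (Y × Bool) ℝ by N_p x (y, true) = p · K₁ x y and N_p x (y, false) = (1−p) · K₂ x y. Then N_{p₂} is a degraded version of N_{p₁}: there exists a row-stochastic matrix V : Matrix (Y × Bool) (Y × Bool) ℝ with N_{p₂} = N_{p₁} * V. -/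
/-!
A symbol received in the good state is kept with probability `a = p₂ / p₁`; otherwise it is
passed through `W` and relabelled as received in the bad state. Since `K₂ = K₁ * W`, this
post-processing turns `N_{p₁}` into `N_{p₁ a} = N_{p₂}`.
-/

/-- A channel with finite input alphabet `X` and finite output alphabet `Y` is a
row-stochastic matrix: nonnegative entries with each row summing to 1. -/
def RowStochastic {X Y : Type*} [Fintype Y] (K : Matrix X Y ℝ) : Prop :=
  (∀ x y, 0 ≤ K x y) ∧ ∀ x, ∑ y, K x y = 1

/-- The state-augmented channel `N_p`: with probability `p` the state is `true` and the
output is drawn from `K₁`, with probability `1 - p` the state is `false` and the output is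
drawn from `K₂`; the receiver observes the pair (output, state). -/
noncomputable def stateAug {X Y : Type*} (p : ℝ) (K₁ K₂ : Matrix X Y ℝ) :
    Matrix X (Y × Bool) ℝ :=
  Matrix.of fun x ys => if ys.2 then p * K₁ x ys.1 else (1 - p) * K₂ x ys.1

section StateDemotion

variable {Y : Type*} [DecidableEq Y]

def stateDemotion (a : ℝ) (W : Matrix Y Y ℝ) : Matrix (Y × Bool) (Y × Bool) ℝ :=
  Matrix.of fun ys zs =>
    if ys.2 then
      (if zs.2 then a * (1 : Matrix Y Y ℝ) ys.1 zs.1 else (1 - a) * W ys.1 zs.1)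
    else
      (if zs.2 then 0 else (1 : Matrix Y Y ℝ) ys.1 zs.1)

variable [Fintype Y]

theorem rowStochastic_stateDemotion {a : ℝ} (ha₀ : 0 ≤ a) (ha₁ : a ≤ 1) {W : Matrix Y Y ℝ}
    (hW : RowStochastic W) : RowStochastic (stateDemotion a W) := by
  refine ⟨?_, ?_⟩
  · rintro ⟨y, s⟩ ⟨z, t⟩
    cases s <;> cases t
    · exact Matrix.zero_le_one_elem y z
    · exact le_rfl
    · exact mul_nonneg (sub_nonneg.2 ha₁) (hW.1 y z)
    · exact mul_nonneg ha₀ (Matrix.zero_le_one_elem y z)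
  · rintro ⟨y, s⟩
    rw [Fintype.sum_prod_type_right, Fintype.sum_bool]
    cases s <;> simp [stateDemotion, Matrix.one_apply, ← Finset.mul_sum, hW.2 y]

theorem stateAug_mul_stateDemotion {X : Type*} (p a : ℝ) (K : Matrix X Y ℝ) (W : Matrix Y Y ℝ) :
    stateAug p K (K * W) * stateDemotion a W = stateAug (p * a) K (K * W) := by
  ext x ⟨z, t⟩
  rw [Matrix.mul_apply, Fintype.sum_prod_type_right, Fintype.sum_bool]
  cases t <;>
    simp only [stateAug, stateDemotion, Matrix.mul_apply, Matrix.of_apply, Matrix.one_apply,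
      Bool.false_eq_true, ↓reduceIte, mul_ite, mul_one, mul_zero, Finset.sum_ite_eq',
      Finset.mem_univ, Finset.sum_const_zero, add_zero]
  · simp only [Finset.mul_sum, ← Finset.sum_add_distrib]
    exact Finset.sum_congr rfl fun _ _ => by ring
  · ring

end StateDemotion

theorem exists_mul_eq_of_le {p₁ p₂ : ℝ} (hp₂ : 0 ≤ p₂) (hle : p₂ ≤ p₁) :
    ∃ a, 0 ≤ a ∧ a ≤ 1 ∧ p₁ * a = p₂ := by
  rcases (hp₂.trans hle).eq_or_lt with h | h
  · exact ⟨1, zero_le_one, le_rfl, by linarith⟩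
  · exact ⟨p₂ / p₁, by positivity, div_le_one_of_le₀ hle h.le, mul_div_cancel₀ _ h.ne'⟩

theorem stateAug_degraded_general {X Y : Type*} [Fintype Y]
    (K₁ K₂ : Matrix X Y ℝ)
    (W : Matrix Y Y ℝ) (hW : RowStochastic W) (hdeg : K₂ = K₁ * W)
    (p₁ p₂ : ℝ) (hp₂ : 0 ≤ p₂) (hle : p₂ ≤ p₁) :
    ∃ V : Matrix (Y × Bool) (Y × Bool) ℝ, RowStochastic V ∧
      stateAug p₂ K₁ K₂ = stateAug p₁ K₁ K₂ * V := by
  classical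
  subst hdeg
  obtain ⟨a, ha₀, ha₁, rfl⟩ := exists_mul_eq_of_le hp₂ hle
  exact ⟨stateDemotion a W, rowStochastic_stateDemotion ha₀ ha₁ hW,
    (stateAug_mul_stateDemotion p₁ a K₁ W).symm⟩

/-- Theorem 3(i): if `K₂` is a degraded version of `K₁`, then for `0 ≤ p₂ ≤ p₁ ≤ 1` the
state-augmented channel `N_{p₂}` is a degraded version of `N_{p₁}`. -/
theorem stateAug_degraded {X Y : Type*} [Fintype X] [Fintype Y] [Nonempty X] [Nonempty Y]
    (K₁ K₂ : Matrix X Y ℝ) (hK₁ : RowStochastic K₁) (hK₂ : RowStochastic K₂)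
    (W : Matrix Y Y ℝ) (hW : RowStochastic W) (hdeg : K₂ = K₁ * W)
    (p₁ p₂ : ℝ) (hp₂ : 0 ≤ p₂) (hle : p₂ ≤ p₁) (hp₁ : p₁ ≤ 1) :
    ∃ V : Matrix (Y × Bool) (Y × Bool) ℝ, RowStochastic V ∧
      stateAug p₂ K₁ K₂ = stateAug p₁ K₁ K₂ * V :=
  stateAug_degraded_general K₁ K₂ W hW hdeg p₁ p₂ hp₂ hle
end

section
/- Let X, Y be nonempty finite types and K₁, K₂ channels from X to Y. Suppose that for every nonempty finite type U and every joint pmf p on U × X, I(U; Y)_{r̃₁} ≥ I(U; Y)_{r̃₂}, where r̃ₖ is the joint pmf on U × Y induced by p and Kₖ (i.e., the broadcast channel with components K₁, K₂ is less noisy). Let 1 ≥ p₁ ≥ p₂ ≥ 0. Then for every nonempty finite type U and every joint pmf p on U × X, the mutual information I(U; Y × Bool) computed from the joint pmf induced by p and the state-augmented mixture channel N_{p₁} is greater than or equal to the one computed from the joint pmf induced by p and N_{p₂}. -/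
/-!
Knowing the state `S` at the receiver splits the output `(Ỹ_S, S)` into two disjoint
blocks, so by the grouping rule of entropy the mutual information of the state-augmented
channel is the mixture `q · I(U; Y₁) + (1 - q) · I(U; Y₂)`: the binary entropy of the state
appears in both `H(Y, S)` and `H(U, Y, S)` and cancels. This is affine in `q` with slope
`I(U; Y₁) - I(U; Y₂) ≥ 0`, hence monotone in `q`.
-/

/-- A pmf on a finite type: nonnegative and summing to 1. -/
def IsPMF {A : Type*} [Fintype A] (w : A → ℝ) : Prop :=
  (∀ a, 0 ≤ w a) ∧ ∑ a, w a = 1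

/-- Shannon entropy (natural logarithm) of a pmf on a finite type. -/
noncomputable def entropy {A : Type*} [Fintype A] (w : A → ℝ) : ℝ :=
  ∑ a, Real.negMulLog (w a)

/-- Mutual information of a joint pmf on a product of finite types. -/
noncomputable def mutualInfo {A B : Type*} [Fintype A] [Fintype B] (r : A × B → ℝ) : ℝ :=
  entropy (fun a => ∑ b, r (a, b)) + entropy (fun b => ∑ a, r (a, b)) - entropy r

/-- A channel from `X` to `Y`: each row is a pmf on `Y`. -/
def IsChannel {X Y : Type*} [Fintype Y] (K : X → Y → ℝ) : Prop :=
  ∀ x, IsPMF (K x)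

/-- The joint pmf on `U × Z` induced by a joint pmf on `U × X` and a channel from `X` to `Z`. -/
noncomputable def induced {U X Z : Type*} [Fintype X] (p : U × X → ℝ) (K : X → Z → ℝ) :
    U × Z → ℝ := fun uz => ∑ x, p (uz.1, x) * K x uz.2

/-- The state-augmented mixture channel `N_q`: the state selects channel `K₁` with
probability `q` and `K₂` with probability `1 - q`, independently of the input, and the
output is the pair (channel output, state). -/
noncomputable def mixChannel {X Y : Type*} (q : ℝ) (K₁ K₂ : X → Y → ℝ) :
    X → Y × Bool → ℝ := fun x ys => if ys.2 then q * K₁ x ys.1 else (1 - q) * K₂ x ys.1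

open Finset Real

theorem entropy_comp_equiv {A B : Type*} [Fintype A] [Fintype B] (e : A ≃ B) (w : B → ℝ) :
    entropy (w ∘ e) = entropy w :=
  e.sum_comp fun b => negMulLog (w b)

theorem entropy_eq_of_bool_blocks {A : Type*} [Fintype A] {w : A × Bool → ℝ} {f g : A → ℝ}
    (a b : ℝ) (hf : ∑ x, f x = 1) (hg : ∑ x, g x = 1)
    (htrue : ∀ x, w (x, true) = a * f x) (hfalse : ∀ x, w (x, false) = b * g x) :
    entropy w = a * entropy f + b * entropy g + negMulLog a + negMulLog b := by
  simp only [entropy, Fintype.sum_prod_type, Fintype.sum_bool, htrue, hfalse, negMulLog_mul,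
    sum_add_distrib, ← sum_mul, ← mul_sum, hf, hg]
  ring

/-- The joint law of `(U, (Y_S, S))` when `S` is `true` with probability `q`, independently of
the pair `(U, Y₁) ~ r₁` resp. `(U, Y₂) ~ r₂`. -/
noncomputable def stateMix {U Y : Type*} (q : ℝ) (r₁ r₂ : U × Y → ℝ) : U × (Y × Bool) → ℝ :=
  fun uys => if uys.2.2 then q * r₁ (uys.1, uys.2.1) else (1 - q) * r₂ (uys.1, uys.2.1)

theorem mutualInfo_stateMix {U Y : Type*} [Fintype U] [Fintype Y] (q : ℝ) {r₁ r₂ : U × Y → ℝ}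
    (h₁ : ∑ uy, r₁ uy = 1) (h₂ : ∑ uy, r₂ uy = 1)
    (hmarg : ∀ u, ∑ y, r₂ (u, y) = ∑ y, r₁ (u, y)) :
    mutualInfo (stateMix q r₁ r₂) = q * mutualInfo r₁ + (1 - q) * mutualInfo r₂ := by
  have hU : (fun u => ∑ ys, stateMix q r₁ r₂ (u, ys)) = fun u => ∑ y, r₁ (u, y) := by
    funext u
    simp only [stateMix, Fintype.sum_prod_type, Fintype.sum_bool, if_true, Bool.false_eq_true,
      if_false, sum_add_distrib, ← mul_sum, hmarg]
    ring
  have hY₁ : ∑ y, ∑ u, r₁ (u, y) = 1 := by rw [sum_comm, ← Fintype.sum_prod_type, h₁]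
  have hY₂ : ∑ y, ∑ u, r₂ (u, y) = 1 := by rw [sum_comm, ← Fintype.sum_prod_type, h₂]
  have hY := entropy_eq_of_bool_blocks (w := fun ys => ∑ u, stateMix q r₁ r₂ (u, ys))
    q (1 - q) hY₁ hY₂ (fun _ => by simp [stateMix, mul_sum]) (fun _ => by simp [stateMix, mul_sum])
  have hUY := entropy_eq_of_bool_blocks (w := stateMix q r₁ r₂ ∘ Equiv.prodAssoc U Y Bool)
    q (1 - q) h₁ h₂ (fun _ => rfl) (fun _ => rfl)
  rw [entropy_comp_equiv] at hUY
  have hU₂ : (fun u => ∑ y, r₂ (u, y)) = fun u => ∑ y, r₁ (u, y) := funext hmarg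
  simp only [mutualInfo, hU, hY, hUY, hU₂]
  ring

section Channels

variable {U X Y : Type*} [Fintype X]

theorem sum_induced_right [Fintype Y] {K : X → Y → ℝ} (hK : IsChannel K) (p : U × X → ℝ)
    (u : U) :
    ∑ y, induced p K (u, y) = ∑ x, p (u, x) := by
  simp only [induced, sum_comm (γ := Y), ← mul_sum, (hK _).2, mul_one]

theorem sum_induced [Fintype U] [Fintype Y] {K : X → Y → ℝ} (hK : IsChannel K)
    {p : U × X → ℝ} (hp : ∑ ux, p ux = 1) :
    ∑ uy, induced p K uy = 1 := by
  simp only [Fintype.sum_prod_type, sum_induced_right hK] at hp ⊢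
  exact hp

theorem induced_mixChannel (q : ℝ) (K₁ K₂ : X → Y → ℝ) (p : U × X → ℝ) :
    induced p (mixChannel q K₁ K₂) = stateMix q (induced p K₁) (induced p K₂) := by
  funext ⟨u, y, s⟩
  cases s <;> simp only [induced, mixChannel, stateMix, mul_sum] <;>
    exact sum_congr rfl fun _ _ => by simp only [Bool.false_eq_true, ↓reduceIte]; ring

theorem mutualInfo_induced_mixChannel [Fintype U] [Fintype Y] (q : ℝ) {K₁ K₂ : X → Y → ℝ}
    (hK₁ : IsChannel K₁) (hK₂ : IsChannel K₂) {p : U × X → ℝ} (hp : ∑ ux, p ux = 1) :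
    mutualInfo (induced p (mixChannel q K₁ K₂)) =
      q * mutualInfo (induced p K₁) + (1 - q) * mutualInfo (induced p K₂) := by
  rw [induced_mixChannel]
  exact mutualInfo_stateMix q (sum_induced hK₁ hp) (sum_induced hK₂ hp) fun u => by
    rw [sum_induced_right hK₁, sum_induced_right hK₂]

end Channels

theorem mixChannel_lessNoisy_general {X Y : Type*} [Fintype X] [Fintype Y]
    (K₁ K₂ : X → Y → ℝ) (hK₁ : IsChannel K₁) (hK₂ : IsChannel K₂)
    (hln : ∀ (U : Type) [Fintype U] [Nonempty U], ∀ p : U × X → ℝ, IsPMF p →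
      mutualInfo (induced p K₂) ≤ mutualInfo (induced p K₁))
    (p₁ p₂ : ℝ) (hle : p₂ ≤ p₁) :
    ∀ (U : Type) [Fintype U] [Nonempty U], ∀ p : U × X → ℝ, IsPMF p →
      mutualInfo (induced p (mixChannel p₂ K₁ K₂)) ≤
        mutualInfo (induced p (mixChannel p₁ K₁ K₂)) := by
  intro U _ _ p hp
  rw [mutualInfo_induced_mixChannel p₁ hK₁ hK₂ hp.2,
    mutualInfo_induced_mixChannel p₂ hK₁ hK₂ hp.2]
  have hslope := mul_le_mul_of_nonneg_left (hln U p hp) (sub_nonneg.2 hle)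
  linarith

/-- Theorem 3(ii): if the broadcast channel with components `K₁, K₂` is less noisy
(receiver 1 less noisy than receiver 2), then for `1 ≥ p₁ ≥ p₂ ≥ 0` the broadcast channel
with two channel state components known at the receivers is less noisy: the receiver whose
state picks `K₁` with the larger probability `p₁` is less noisy. -/
theorem mixChannel_lessNoisy {X Y : Type*} [Fintype X] [Fintype Y] [Nonempty X] [Nonempty Y]
    (K₁ K₂ : X → Y → ℝ) (hK₁ : IsChannel K₁) (hK₂ : IsChannel K₂)
    (hln : ∀ (U : Type) [Fintype U] [Nonempty U], ∀ p : U × X → ℝ, IsPMF p →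
      mutualInfo (induced p K₂) ≤ mutualInfo (induced p K₁))
    (p₁ p₂ : ℝ) (hp₂ : 0 ≤ p₂) (hle : p₂ ≤ p₁) (hp₁ : p₁ ≤ 1) :
    ∀ (U : Type) [Fintype U] [Nonempty U], ∀ p : U × X → ℝ, IsPMF p →
      mutualInfo (induced p (mixChannel p₂ K₁ K₂)) ≤
        mutualInfo (induced p (mixChannel p₁ K₁ K₂)) :=
  mixChannel_lessNoisy_general K₁ K₂ hK₁ hK₂ hln p₁ p₂ hle
end

section
/- Let m ≥ 1 and let Y be a nonempty finite type. Call a channel κ from Fin m to Y c-symmetric if for every j : Fin m there exists a permutation π of Y such that κ (i + j) (π y) = κ i y for all i : Fin m and y : Y (addition in Fin m, i.e., modulo m). If κ₁ and κ₂ are c-symmetric channels from Fin m to Y and q ∈ [0,1], then the state-augmented mixture channel η from Fin m to Y × Bool, defined by η i (y, true) = q · κ₁ i y and η i (y, false) = (1−q) · κ₂ i y, is c-symmetric as a channel with output alphabet Y × Bool. -/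
/-- A channel from `Fin m` to `Y` is c-symmetric if for every cyclic shift `j` of the input
there is a permutation of the output alphabet carrying the channel law at `i` to that at
`i + j` (addition modulo `m`). -/
def CSymmetric {m : ℕ} {Y : Type*} (κ : Fin m → Y → ℝ) : Prop :=
  ∀ j : Fin m, ∃ π : Equiv.Perm Y, ∀ (i : Fin m) (y : Y), κ (i + j) (π y) = κ i y

theorem CSymmetric.const_mul {m : ℕ} {Y : Type*} {κ : Fin m → Y → ℝ} (hκ : CSymmetric κ)
    (c : ℝ) : CSymmetric fun i y => c * κ i y := by
  intro j
  obtain ⟨π, hπ⟩ := hκ j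
  exact ⟨π, fun i y => congrArg (c * ·) (hπ i y)⟩

theorem cSymmetric_of_forall_state {m : ℕ} {Y S : Type*} {η : Fin m → Y × S → ℝ}
    (hη : ∀ s, CSymmetric fun i y => η i (y, s)) : CSymmetric η := by
  intro j
  choose π hπ using fun s => hη s j
  exact ⟨Equiv.prodCongrLeft π, fun i ⟨y, s⟩ => hπ s i y⟩

theorem mixChannel_cSymmetric_general {m : ℕ} {Y : Type*}
    (κ₁ κ₂ : Fin m → Y → ℝ)
    (hc₁ : CSymmetric κ₁) (hc₂ : CSymmetric κ₂)
    (q : ℝ) :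
    CSymmetric (mixChannel q κ₁ κ₂) := by
  refine cSymmetric_of_forall_state fun s => ?_
  cases s
  · exact hc₂.const_mul (1 - q)
  · exact hc₁.const_mul q

/-- Structural part of Theorem 3(iv): if both channel components are c-symmetric, then the
state-augmented mixture channel (whose output includes the state) is c-symmetric. -/
theorem mixChannel_cSymmetric {m : ℕ} (hm : 1 ≤ m) {Y : Type*} [Fintype Y] [Nonempty Y]
    (κ₁ κ₂ : Fin m → Y → ℝ) (hκ₁ : IsChannel κ₁) (hκ₂ : IsChannel κ₂)
    (hc₁ : CSymmetric κ₁) (hc₂ : CSymmetric κ₂)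
    (q : ℝ) (hq0 : 0 ≤ q) (hq1 : q ≤ 1) :
    CSymmetric (mixChannel q κ₁ κ₂) :=
  mixChannel_cSymmetric_general κ₁ κ₂ hc₁ hc₂ q
end

section
/- Let U and X be nonempty finite types, p a joint pmf on U × X, k ≥ 1, ε : Fin k → [0,1], and w a pmf on Fin k. Define the joint pmf r on U × (Option X × Fin k) by r(u, (some x, i)) = w i · (1 − ε i) · p(u,x) and r(u, (none, i)) = w i · ε i · (∑_x p(u,x)). Then I(U; Option X × Fin k)_r = (∑_i w i · (1 − ε i)) · I(U; X)_p. -/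
/-- The joint pmf of `(U, (Y, S))` for a receiver of the erasure broadcast channel with `k`
channel state components: state `i` has probability `v i`, and given state `i` the input is
erased with probability `ε i` and otherwise passed through. -/
noncomputable def erasureJoint {U X : Type*} [Fintype X] {k : ℕ}
    (v : Fin k → ℝ) (ε : Fin k → ℝ) (p : U × X → ℝ) :
    U × (Option X × Fin k) → ℝ :=
  fun uz => match uz.2.1 with
    | some x => v uz.2.2 * (1 - ε uz.2.2) * p (uz.1, x)
    | none => v uz.2.2 * ε uz.2.2 * ∑ x, p (uz.1, x)

/-!
Conditioned on the state `i`, the receiver sees `X` with weight `w i (1 - ε i)` and nothing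
with weight `w i ε i`, independently of `(U, X)`. Since `negMulLog (c t) = t negMulLog c +
c negMulLog t`, every entropy of `r` splits into the entropy of these state weights plus the
corresponding entropy of `p` scaled by the total weight: `H(r) = H(weights) + D H(U) + C H(U, X)`
and `H(Y, S) = H(weights) + C H(X)`, while the `U`-marginal of `r` is that of `p`. With
`C + D = 1` the weight entropies cancel in `I(U; Y, S)` and what is left is `C I(U; X)`.
-/

open Finset

section Entropy

variable {A B X S : Type*} [Fintype A] [Fintype B] [Fintype X] [Fintype S]

lemma entropy_mul_prod (f : A → ℝ) (g : B → ℝ) :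
    entropy (fun ab : A × B => f ab.1 * g ab.2)
      = (∑ b, g b) * entropy f + (∑ a, f a) * entropy g := by
  simp only [entropy, Fintype.sum_prod_type, Real.negMulLog_mul, sum_add_distrib, ← sum_mul,
    ← mul_sum]

lemma entropy_option_prod (f : Option X × S → ℝ) :
    entropy f = entropy (fun s => f (none, s))
      + entropy (fun xs : X × S => f (some xs.1, xs.2)) := by
  simp only [entropy, Fintype.sum_prod_type, Fintype.sum_option]

lemma entropy_prod_option_prod (r : A × (Option X × S) → ℝ) :
    entropy r = entropy (fun as : A × S => r (as.1, (none, as.2)))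
      + entropy (fun axs : (A × X) × S => r (axs.1.1, (some axs.1.2, axs.2))) := by
  simp only [entropy, Fintype.sum_prod_type, Fintype.sum_option, sum_add_distrib]

end Entropy

section ErasureJoint

variable {U X : Type*} [Fintype X] {k : ℕ} (w ε : Fin k → ℝ) (p : U × X → ℝ)

lemma sum_erasureJoint_left (u : U) :
    ∑ z, erasureJoint w ε p (u, z) = (∑ i, w i) * ∑ x, p (u, x) := by
  simp only [erasureJoint, Fintype.sum_prod_type, Fintype.sum_option]
  rw [sum_comm (s := (univ : Finset X))]
  simp only [← mul_sum, ← sum_add_distrib, ← add_mul, ← mul_add, add_sub_cancel, mul_one, sum_mul]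

variable [Fintype U]

lemma entropy_erasureJoint (hp : ∑ a, p a = 1) :
    entropy (erasureJoint w ε p)
      = entropy (fun i => w i * ε i) + (∑ i, w i * ε i) * entropy (fun u => ∑ x, p (u, x))
        + (entropy (fun i => w i * (1 - ε i)) + (∑ i, w i * (1 - ε i)) * entropy p) := by
  have hpU : ∑ u, ∑ x, p (u, x) = 1 := by rwa [← Fintype.sum_prod_type]
  rw [entropy_prod_option_prod]
  simp only [erasureJoint, mul_comm (w _ * _), Prod.mk.eta]
  rw [entropy_mul_prod (fun u => ∑ x, p (u, x)) (fun i => w i * ε i),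
    entropy_mul_prod p (fun i => w i * (1 - ε i)), hpU, hp]
  ring

lemma entropy_erasureJoint_right (hp : ∑ a, p a = 1) :
    entropy (fun z => ∑ u, erasureJoint w ε p (u, z))
      = entropy (fun i => w i * ε i)
        + (entropy (fun i => w i * (1 - ε i))
          + (∑ i, w i * (1 - ε i)) * entropy (fun x => ∑ u, p (u, x))) := by
  have hpU : ∑ u, ∑ x, p (u, x) = 1 := by rwa [← Fintype.sum_prod_type]
  have hpX : ∑ x, ∑ u, p (u, x) = 1 := by rwa [sum_comm]
  rw [entropy_option_prod]
  simp only [erasureJoint, ← mul_sum, hpU, mul_one]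
  simp only [mul_comm (w _ * _)]
  rw [entropy_mul_prod (fun x => ∑ u, p (u, x)) (fun i => w i * (1 - ε i)), hpX]
  ring

end ErasureJoint

theorem mutualInfo_erasureJoint_general {U X : Type*} [Fintype U] [Fintype X]
    {k : ℕ} (ε : Fin k → ℝ)
    (w : Fin k → ℝ) (hw : IsPMF w)
    (p : U × X → ℝ) (hp : IsPMF p) :
    mutualInfo (erasureJoint w ε p) = (∑ i, w i * (1 - ε i)) * mutualInfo p := by
  have hweights : ∑ i, w i * ε i + ∑ i, w i * (1 - ε i) = 1 := by
    simp only [← sum_add_distrib, ← mul_add, add_sub_cancel, mul_one, hw.2]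
  have hmargU : (fun u => ∑ z, erasureJoint w ε p (u, z)) = fun u => ∑ x, p (u, x) := by
    simp only [sum_erasureJoint_left, hw.2, one_mul]
  rw [mutualInfo, mutualInfo, hmargU, entropy_erasureJoint_right w ε p hp.2,
    entropy_erasureJoint w ε p hp.2]
  linear_combination (-entropy fun u => ∑ x, p (u, x)) * hweights

/-- Core identity for the erasure broadcast channel with `k` state components:
`I(U; Y, S) = (∑ i, w i (1 − ε i)) · I(U; X)`. -/
theorem mutualInfo_erasureJoint {U X : Type*} [Fintype U] [Fintype X] [Nonempty U] [Nonempty X]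
    {k : ℕ} (hk : 1 ≤ k) (ε : Fin k → ℝ) (hε : ∀ i, ε i ∈ Set.Icc (0 : ℝ) 1)
    (w : Fin k → ℝ) (hw : IsPMF w)
    (p : U × X → ℝ) (hp : IsPMF p) :
    mutualInfo (erasureJoint w ε p) = (∑ i, w i * (1 - ε i)) * mutualInfo p :=
  mutualInfo_erasureJoint_general ε w hw p hp
end

section
/- Let α : Fin 3 → [0,1] and p, q : Fin 3 → ℝ with p i ≥ 0, q i ≥ 0 for all i and ∑_i p i = ∑_i q i = 1. Define D : ℝ → ℝ by D(x) = ∑_i (p i − q i) · (binEntropy(x ⋆ α i) − binEntropy(α i)). If D(1/2) ≥ 0, then either D(x) ≥ 0 for all x ∈ [0,1], or D(x) ≤ D(1/2) for all x ∈ [0,1]. -/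
/-- Binary convolution: `x ⋆ a = x(1−a) + a(1−x)`. -/
noncomputable def bconv (x a : ℝ) : ℝ := x * (1 - a) + a * (1 - x)

/-!
Measure a crossover probability `a` by its bias `1 - 2a` and let `C(v) = log 2 - h((1 - v)/2)` be
the capacity of the binary symmetric channel of bias `v`. Since `1 - 2(x ⋆ a) = (1 - 2x)(1 - 2a)`
and `C` is even, `D(x) = N(1) - N(σ)` with `σ = |1 - 2x|`, `N(σ) = ∑ cᵢ C(σ uᵢ)`,
`uᵢ = |1 - 2αᵢ|` and `cᵢ = pᵢ - qᵢ`, so that `∑ cᵢ = 0` and `N(0) = 0`.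

Order `u₀ ≤ u₁ ≤ u₂`. Then `N = c₂ e₂ - c₀ e₁` for the nonnegative increasing differences
`e₁(σ) = C(σu₁) - C(σu₀)` and `e₂(σ) = C(σu₂) - C(σu₁)`, and everything rests on `e₁ / e₂`
being decreasing on `(0, 1]`. All these functions vanish at `σ = 0`, so the monotone form of
l'Hôpital's rule, applied twice, reduces this to the ratio of second derivatives, which is a
nonnegative constant times `(1 - σ²u₂²) / (1 - σ²u₀²)`. Granted that, the sign of `c₀` decides:
`c₀ ≥ 0` forces `N ≤ N(1)` and `c₀ ≤ 0` forces `N ≥ N(0)` on `[0, 1]`.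
-/

open Real Set

lemma mul_le_mul_of_antitoneOn_deriv_div {f g f' g' : ℝ → ℝ} {a b : ℝ}
    (hfc : ContinuousOn f (Icc a b)) (hgc : ContinuousOn g (Icc a b))
    (hf : ∀ x ∈ Ioo a b, HasDerivAt f (f' x) x) (hg : ∀ x ∈ Ioo a b, HasDerivAt g (g' x) x)
    (hfa : f a = 0) (hga : g a = 0) (hg' : ∀ x ∈ Ioo a b, 0 < g' x)
    (hr : AntitoneOn (fun x => f' x / g' x) (Ioo a b))
    {x y : ℝ} (hax : a ≤ x) (hxy : x ≤ y) (hyb : y ≤ b) :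
    f y * g x ≤ f x * g y := by
  rcases hax.eq_or_lt with rfl | hax
  · simp [hfa, hga]
  rcases hxy.eq_or_lt with rfl | hxy
  · rw [mul_comm]
  have hsub₁ : Icc a x ⊆ Icc a b := Icc_subset_Icc_right (hxy.le.trans hyb)
  have hsub₂ : Icc x y ⊆ Icc a b := Icc_subset_Icc hax.le hyb
  have hsub₁' : Ioo a x ⊆ Ioo a b := Ioo_subset_Ioo_right (hxy.le.trans hyb)
  have hsub₂' : Ioo x y ⊆ Ioo a b := Ioo_subset_Ioo hax.le hyb
  obtain ⟨c₁, hc₁, hfx⟩ := exists_ratio_hasDerivAt_eq_ratio_slope f f' hax (hfc.mono hsub₁)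
    (fun z hz => hf z (hsub₁' hz)) g g' (hgc.mono hsub₁) (fun z hz => hg z (hsub₁' hz))
  obtain ⟨c₂, hc₂, hfy⟩ := exists_ratio_hasDerivAt_eq_ratio_slope f f' hxy (hfc.mono hsub₂)
    (fun z hz => hf z (hsub₂' hz)) g g' (hgc.mono hsub₂) (fun z hz => hg z (hsub₂' hz))
  obtain ⟨d₁, hd₁, hgx⟩ := exists_hasDerivAt_eq_slope g g' hax (hgc.mono hsub₁)
    (fun z hz => hg z (hsub₁' hz))
  obtain ⟨d₂, hd₂, hgy⟩ := exists_hasDerivAt_eq_slope g g' hxy (hgc.mono hsub₂)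
    (fun z hz => hg z (hsub₂' hz))
  have hgx_pos : 0 < g x := by
    have := hg' d₁ (hsub₁' hd₁)
    rw [hgx, hga, sub_zero] at this
    exact (div_pos_iff_of_pos_right (sub_pos.2 hax)).1 this
  have hgxy_pos : 0 < g y - g x := by
    have := hg' d₂ (hsub₂' hd₂)
    rw [hgy] at this
    exact (div_pos_iff_of_pos_right (sub_pos.2 hxy)).1 this
  set r₁ := f' c₁ / g' c₁
  set r₂ := f' c₂ / g' c₂
  have hr₁ : f x = g x * r₁ := by
    rw [hfa, hga, sub_zero, sub_zero] at hfx
    rw [eq_comm, mul_div_assoc', div_eq_iff (hg' c₁ (hsub₁' hc₁)).ne', hfx]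
  have hr₂ : f y - f x = (g y - g x) * r₂ := by
    rw [eq_comm, mul_div_assoc', div_eq_iff (hg' c₂ (hsub₂' hc₂)).ne', hfy]
  have hr₂₁ : r₂ ≤ r₁ := hr (hsub₁' hc₁) (hsub₂' hc₂) (hc₁.2.trans hc₂.1).le
  calc f y * g x = (f x + (g y - g x) * r₂) * g x := by rw [← hr₂]; ring
    _ ≤ (f x + (g y - g x) * r₁) * g x := by gcongr
    _ = f x * g y := by rw [hr₁]; ring

namespace Real

lemma artanh_eq_half_sub_log {x : ℝ} (hx : x ∈ Ioo (-1) 1) :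
    artanh x = (log (1 + x) - log (1 - x)) / 2 := by
  rw [artanh_eq_half_log (Ioo_subset_Icc_self hx),
    log_div (by linarith [hx.1]) (by linarith [hx.2])]
  ring

lemma hasDerivAt_artanh {x : ℝ} (hx : x ∈ Ioo (-1) 1) : HasDerivAt artanh (1 - x ^ 2)⁻¹ x := by
  have h₁ : 1 + x ≠ 0 := by linarith [hx.1]
  have h₂ : 1 - x ≠ 0 := by linarith [hx.2]
  have hlog := ((((hasDerivAt_id' x).const_add 1).log h₁).sub
    (((hasDerivAt_id' x).const_sub 1).log h₂)).div_const 2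
  refine (hlog.congr_of_eventuallyEq ?_).congr_deriv ?_
  · filter_upwards [Ioo_mem_nhds hx.1 hx.2] with y hy using artanh_eq_half_sub_log hy
  · rw [show 1 - x ^ 2 = (1 + x) * (1 - x) by ring]
    field_simp
    ring

end Real

/-- The capacity of the binary symmetric channel with crossover probability `(1 - v) / 2`. -/
noncomputable def bscCapacity (v : ℝ) : ℝ := log 2 - binEntropy ((1 - v) / 2)

lemma bscCapacity_abs (v : ℝ) : bscCapacity |v| = bscCapacity v := by
  rcases abs_choice v with h | h
  · rw [h]
  · rw [h, bscCapacity, bscCapacity, ← binEntropy_one_sub]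
    ring_nf

lemma binEntropy_bconv (x a : ℝ) :
    binEntropy (bconv x a) = log 2 - bscCapacity (|1 - 2 * x| * |1 - 2 * a|) := by
  rw [← abs_mul, bscCapacity_abs, bscCapacity, bconv]
  ring_nf

lemma binEntropy_bconv_sub_binEntropy (x a : ℝ) :
    binEntropy (bconv x a) - binEntropy a =
      bscCapacity |1 - 2 * a| - bscCapacity (|1 - 2 * x| * |1 - 2 * a|) := by
  have h := binEntropy_bconv 0 a
  simp only [bconv, zero_mul, sub_zero, zero_add, mul_one, mul_zero, abs_one, one_mul] at h
  rw [binEntropy_bconv, h]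
  ring

@[fun_prop]
lemma continuous_bscCapacity : Continuous bscCapacity := by
  unfold bscCapacity; fun_prop

lemma hasDerivAt_bscCapacity {v : ℝ} (hv : v ∈ Ioo (-1) 1) :
    HasDerivAt bscCapacity (artanh v) v := by
  have h₀ : (1 - v) / 2 ≠ 0 := by linarith [hv.2]
  have h₁ : (1 - v) / 2 ≠ 1 := by linarith [hv.1]
  have h := ((hasDerivAt_binEntropy h₀ h₁).comp v
    (((hasDerivAt_id' v).const_sub 1).div_const 2)).const_sub (log 2)
  refine h.congr_deriv ?_
  rw [artanh_eq_half_log (Ioo_subset_Icc_self hv), ← log_div (by linarith [hv.1]) h₀]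
  have : (1 - (1 - v) / 2) / ((1 - v) / 2) = (1 + v) / (1 - v) := by
    field_simp
    ring
  rw [this]
  ring

section Scaled

variable {u σ : ℝ}

lemma hasDerivAt_bscCapacity_mul (h : σ * u ∈ Ioo (-1) 1) :
    HasDerivAt (fun τ => bscCapacity (τ * u)) (u * artanh (σ * u)) σ := by
  have := (hasDerivAt_bscCapacity h).comp σ ((hasDerivAt_id' σ).mul_const u)
  exact this.congr_deriv (by ring)

lemma hasDerivAt_mul_artanh_mul (h : σ * u ∈ Ioo (-1) 1) :
    HasDerivAt (fun τ => u * artanh (τ * u)) (u ^ 2 / (1 - (σ * u) ^ 2)) σ := by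
  have := ((Real.hasDerivAt_artanh h).comp σ ((hasDerivAt_id' σ).mul_const u)).const_mul u
  exact this.congr_deriv (by ring)

lemma mul_mem_Ioo_neg_one_one (hσ : σ ∈ Ico 0 1) (hu : u ∈ Icc 0 1) : σ * u ∈ Ioo (-1) 1 :=
  ⟨by nlinarith [mul_nonneg hσ.1 hu.1], mul_lt_one_of_nonneg_of_lt_one_left hσ.1 hσ.2 hu.2⟩

end Scaled

section Comparison

variable {a b σ : ℝ}

lemma mul_artanh_mul_le (ha : 0 ≤ a) (hab : a ≤ b) (hσ : 0 ≤ σ) (hb : σ * b < 1) :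
    a * artanh (σ * a) ≤ b * artanh (σ * b) :=
  mul_le_mul hab (artanh_le_artanh (by nlinarith) hb (by nlinarith))
    (artanh_nonneg (by positivity)) (ha.trans hab)

lemma mul_artanh_mul_lt (ha : 0 ≤ a) (hab : a < b) (hσ : 0 < σ) (hb : σ * b < 1) :
    a * artanh (σ * a) < b * artanh (σ * b) :=
  calc a * artanh (σ * a) ≤ a * artanh (σ * b) :=
        mul_le_mul_of_nonneg_left (artanh_le_artanh (by nlinarith) hb (by nlinarith)) ha
    _ < b * artanh (σ * b) := mul_lt_mul_of_pos_right hab (artanh_pos ⟨by nlinarith, hb⟩)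

lemma sq_div_one_sub_sq_mul_lt (ha : 0 ≤ a) (hab : a < b) (hσ : 0 ≤ σ) (hb : σ * b < 1) :
    a ^ 2 / (1 - (σ * a) ^ 2) < b ^ 2 / (1 - (σ * b) ^ 2) := by
  have hσab : σ * a ≤ σ * b := mul_le_mul_of_nonneg_left hab.le hσ
  have hσa : 0 ≤ σ * a := mul_nonneg hσ ha
  have h₁ : 0 < 1 - (σ * b) ^ 2 := by nlinarith
  have h₂ : 1 - (σ * b) ^ 2 ≤ 1 - (σ * a) ^ 2 := by nlinarith
  calc a ^ 2 / (1 - (σ * a) ^ 2) ≤ a ^ 2 / (1 - (σ * b) ^ 2) := by gcongr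
    _ < b ^ 2 / (1 - (σ * b) ^ 2) := by gcongr

end Comparison

lemma monotoneOn_bscCapacity_mul_sub {a b : ℝ} (ha : 0 ≤ a) (hab : a ≤ b) (hb : b ≤ 1) :
    MonotoneOn (fun σ => bscCapacity (σ * b) - bscCapacity (σ * a)) (Icc 0 1) := by
  refine monotoneOn_of_hasDerivWithinAt_nonneg (convex_Icc 0 1)
    (f' := fun σ => b * artanh (σ * b) - a * artanh (σ * a)) (by fun_prop)
    (fun σ hσ => ?_) (fun σ hσ => ?_) <;> rw [interior_Icc] at hσ
  · rw [interior_Icc]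
    exact ((hasDerivAt_bscCapacity_mul (mul_mem_Ioo_neg_one_one (Ioo_subset_Ico_self hσ)
      ⟨ha.trans hab, hb⟩)).sub (hasDerivAt_bscCapacity_mul (mul_mem_Ioo_neg_one_one
      (Ioo_subset_Ico_self hσ) ⟨ha, hab.trans hb⟩))).hasDerivWithinAt
  · exact sub_nonneg.2 (mul_artanh_mul_le ha hab hσ.1.le
      (mul_lt_one_of_nonneg_of_lt_one_left hσ.1.le hσ.2 hb))

section Ratios

variable {a b c : ℝ}

lemma antitoneOn_ratio_sq_div_one_sub_sq (ha : 0 ≤ a) (hab : a ≤ b) (hbc : b < c) (hc : c ≤ 1) :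
    AntitoneOn (fun σ => (b ^ 2 / (1 - (σ * b) ^ 2) - a ^ 2 / (1 - (σ * a) ^ 2)) /
      (c ^ 2 / (1 - (σ * c) ^ 2) - b ^ 2 / (1 - (σ * b) ^ 2))) (Ioo 0 1) := by
  have hfactor : ∀ σ ∈ Ioo (0 : ℝ) 1,
      (b ^ 2 / (1 - (σ * b) ^ 2) - a ^ 2 / (1 - (σ * a) ^ 2)) /
        (c ^ 2 / (1 - (σ * c) ^ 2) - b ^ 2 / (1 - (σ * b) ^ 2)) =
      (b ^ 2 - a ^ 2) / (c ^ 2 - b ^ 2) * ((1 - (σ * c) ^ 2) / (1 - (σ * a) ^ 2)) := by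
    intro σ hσ
    have h₁ : σ * c < 1 := mul_lt_one_of_nonneg_of_lt_one_left hσ.1.le hσ.2 hc
    have hσc : σ * b < σ * c := mul_lt_mul_of_pos_left hbc hσ.1
    have hσb : σ * a ≤ σ * b := mul_le_mul_of_nonneg_left hab hσ.1.le
    have hσa : 0 ≤ σ * a := mul_nonneg hσ.1.le ha
    have hA : 1 - (σ * a) ^ 2 ≠ 0 := by nlinarith
    have hB : 1 - (σ * b) ^ 2 ≠ 0 := by nlinarith
    have hC : 1 - (σ * c) ^ 2 ≠ 0 := by nlinarith
    have hcb : c ^ 2 - b ^ 2 ≠ 0 := by nlinarith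
    rw [div_sub_div _ _ hB hA, div_sub_div _ _ hC hB,
      show b ^ 2 * (1 - (σ * a) ^ 2) - (1 - (σ * b) ^ 2) * a ^ 2 = b ^ 2 - a ^ 2 by ring,
      show c ^ 2 * (1 - (σ * b) ^ 2) - (1 - (σ * c) ^ 2) * b ^ 2 = c ^ 2 - b ^ 2 by ring]
    generalize 1 - (σ * a) ^ 2 = A at *
    generalize 1 - (σ * b) ^ 2 = B at *
    generalize 1 - (σ * c) ^ 2 = C at *
    field_simp
  intro σ hσ τ hτ hστ
  simp only [hfactor σ hσ, hfactor τ hτ]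
  have hK : 0 ≤ (b ^ 2 - a ^ 2) / (c ^ 2 - b ^ 2) :=
    div_nonneg (by nlinarith) (by nlinarith)
  refine mul_le_mul_of_nonneg_left ?_ hK
  have hτa : τ * a < 1 := mul_lt_one_of_nonneg_of_lt_one_left hτ.1.le hτ.2 (by linarith)
  have hσa : σ * a < 1 := mul_lt_one_of_nonneg_of_lt_one_left hσ.1.le hσ.2 (by linarith)
  rw [div_le_div_iff₀ (by nlinarith [mul_nonneg hτ.1.le ha]) (by nlinarith [mul_nonneg hσ.1.le ha])]
  have hστ2 : σ ^ 2 ≤ τ ^ 2 := pow_le_pow_left₀ hσ.1.le hστ 2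
  have hac2 : a ^ 2 ≤ c ^ 2 := pow_le_pow_left₀ ha (hab.trans hbc.le) 2
  nlinarith [mul_nonneg (sub_nonneg.2 hστ2) (sub_nonneg.2 hac2)]

lemma antitoneOn_ratio_mul_artanh_mul (ha : 0 ≤ a) (hab : a ≤ b) (hbc : b < c) (hc : c ≤ 1) :
    AntitoneOn (fun σ => (b * artanh (σ * b) - a * artanh (σ * a)) /
      (c * artanh (σ * c) - b * artanh (σ * b))) (Ioo 0 1) := by
  have hderiv : ∀ u ∈ Icc (0 : ℝ) 1, ∀ σ ∈ Ico (0 : ℝ) 1,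
      HasDerivAt (fun τ => u * artanh (τ * u)) (u ^ 2 / (1 - (σ * u) ^ 2)) σ :=
    fun u hu σ hσ => hasDerivAt_mul_artanh_mul (mul_mem_Ioo_neg_one_one hσ hu)
  have hau : a ∈ Icc (0 : ℝ) 1 := ⟨ha, by linarith⟩
  have hbu : b ∈ Icc (0 : ℝ) 1 := ⟨by linarith, by linarith⟩
  have hcu : c ∈ Icc (0 : ℝ) 1 := ⟨by linarith, hc⟩
  have hpos : ∀ σ ∈ Ioo (0 : ℝ) 1, 0 < c * artanh (σ * c) - b * artanh (σ * b) := fun σ hσ =>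
    sub_pos.2 (mul_artanh_mul_lt (by linarith) hbc hσ.1
      (mul_lt_one_of_nonneg_of_lt_one_left hσ.1.le hσ.2 hc))
  intro x hx y hy hxy
  have hIcc : Icc 0 y ⊆ Ico (0 : ℝ) 1 := Icc_subset_Ico_right hy.2
  have hIoo : Ioo 0 y ⊆ Ico (0 : ℝ) 1 := Ioo_subset_Icc_self.trans hIcc
  have hcont : ∀ u ∈ Icc (0 : ℝ) 1, ContinuousOn (fun τ => u * artanh (τ * u)) (Icc 0 y) :=
    fun u hu σ hσ => (hderiv u hu σ (hIcc hσ)).continuousAt.continuousWithinAt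
  have key := mul_le_mul_of_antitoneOn_deriv_div (a := 0) (b := y)
    ((hcont b hbu).sub (hcont a hau)) ((hcont c hcu).sub (hcont b hbu))
    (fun σ hσ => (hderiv b hbu σ (hIoo hσ)).sub (hderiv a hau σ (hIoo hσ)))
    (fun σ hσ => (hderiv c hcu σ (hIoo hσ)).sub (hderiv b hbu σ (hIoo hσ)))
    (by simp) (by simp)
    (fun σ hσ => sub_pos.2 (sq_div_one_sub_sq_mul_lt (by linarith) hbc hσ.1.le
      (mul_lt_one_of_nonneg_of_lt_one_left hσ.1.le (hσ.2.trans hy.2) hc)))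
    ((antitoneOn_ratio_sq_div_one_sub_sq ha hab hbc hc).mono (Ioo_subset_Ioo_right hy.2.le))
    hx.1.le hxy le_rfl
  exact (div_le_div_iff₀ (hpos y hy) (hpos x hx)).2 key

end Ratios

lemma bscCapacity_mul_sub_cross {a b c σ : ℝ} (ha : 0 ≤ a) (hab : a ≤ b) (hbc : b ≤ c) (hc : c ≤ 1)
    (hσ : σ ∈ Icc 0 1) :
    (bscCapacity b - bscCapacity a) * (bscCapacity (σ * c) - bscCapacity (σ * b)) ≤
      (bscCapacity (σ * b) - bscCapacity (σ * a)) * (bscCapacity c - bscCapacity b) := by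
  rcases hbc.eq_or_lt with rfl | hbc
  · simp
  have hderiv : ∀ u ∈ Icc (0 : ℝ) 1, ∀ σ ∈ Ioo (0 : ℝ) 1,
      HasDerivAt (fun τ => bscCapacity (τ * u)) (u * artanh (σ * u)) σ :=
    fun u hu σ hσ =>
      hasDerivAt_bscCapacity_mul (mul_mem_Ioo_neg_one_one (Ioo_subset_Ico_self hσ) hu)
  have hau : a ∈ Icc (0 : ℝ) 1 := ⟨ha, by linarith⟩
  have hbu : b ∈ Icc (0 : ℝ) 1 := ⟨by linarith, by linarith⟩
  have hcu : c ∈ Icc (0 : ℝ) 1 := ⟨by linarith, hc⟩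
  have key := mul_le_mul_of_antitoneOn_deriv_div (a := 0) (b := 1)
    (by fun_prop) (by fun_prop)
    (fun σ hσ => (hderiv b hbu σ hσ).sub (hderiv a hau σ hσ))
    (fun σ hσ => (hderiv c hcu σ hσ).sub (hderiv b hbu σ hσ))
    (by simp) (by simp)
    (fun σ hσ => sub_pos.2 (mul_artanh_mul_lt (by linarith) hbc hσ.1
      (mul_lt_one_of_nonneg_of_lt_one_left hσ.1.le hσ.2 hc)))
    (antitoneOn_ratio_mul_artanh_mul ha hab hbc hc) hσ.1 hσ.2 le_rfl
  simpa only [Pi.sub_apply, one_mul] using key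

lemma dichotomy_of_cross {ι : Type*} {s : Set ι} {e₁ e₂ : ι → ℝ} {t : ι} {c₁ c₂ : ℝ}
    (he₁ : ∀ σ ∈ s, 0 ≤ e₁ σ) (he₂ : ∀ σ ∈ s, 0 ≤ e₂ σ ∧ e₂ σ ≤ e₂ t)
    (hcross : ∀ σ ∈ s, e₁ t * e₂ σ ≤ e₁ σ * e₂ t) (ht : 0 ≤ c₂ * e₂ t - c₁ * e₁ t) :
    (∀ σ ∈ s, c₂ * e₂ σ - c₁ * e₁ σ ≤ c₂ * e₂ t - c₁ * e₁ t) ∨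
      (∀ σ ∈ s, 0 ≤ c₂ * e₂ σ - c₁ * e₁ σ) := by
  rcases le_total 0 c₁ with hc₁ | hc₁
  · left
    intro σ hσ
    obtain ⟨h₀, h₁⟩ := he₂ σ hσ
    rcases (h₀.trans h₁).eq_or_lt with h | h
    · have he : e₂ σ = 0 := by linarith
      rw [he]
      nlinarith [mul_nonneg hc₁ (he₁ σ hσ)]
    · refine le_of_mul_le_mul_left ?_ h
      nlinarith [mul_le_mul_of_nonneg_left (hcross σ hσ) hc₁, mul_le_mul_of_nonneg_right h₁ ht]
  · right
    intro σ hσ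
    obtain ⟨h₀, h₁⟩ := he₂ σ hσ
    rcases (h₀.trans h₁).eq_or_lt with h | h
    · have he : e₂ σ = 0 := by linarith
      rw [he]
      nlinarith [mul_nonneg (neg_nonneg.2 hc₁) (he₁ σ hσ)]
    · refine nonneg_of_mul_nonneg_right ?_ h
      nlinarith [mul_le_mul_of_nonneg_left (hcross σ hσ) (neg_nonneg.2 hc₁), mul_nonneg h₀ ht]

theorem bscCapacity_three_dichotomy {a b c : ℝ} (ha : 0 ≤ a) (hab : a ≤ b) (hbc : b ≤ c)
    (hc : c ≤ 1) {ca cb cc : ℝ} (hsum : ca + cb + cc = 0) {N : ℝ → ℝ}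
    (hN : ∀ σ, N σ = ca * bscCapacity (σ * a) + cb * bscCapacity (σ * b) + cc * bscCapacity (σ * c))
    (h : N 0 ≤ N 1) :
    (∀ σ ∈ Icc (0 : ℝ) 1, N σ ≤ N 1) ∨ (∀ σ ∈ Icc (0 : ℝ) 1, N 0 ≤ N σ) := by
  have hN' : ∀ σ, N σ = cc * (bscCapacity (σ * c) - bscCapacity (σ * b)) -
      ca * (bscCapacity (σ * b) - bscCapacity (σ * a)) := fun σ => by
    rw [hN]
    linear_combination bscCapacity (σ * b) * hsum
  have h₁ := monotoneOn_bscCapacity_mul_sub ha hab (hbc.trans hc)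
  have h₂ := monotoneOn_bscCapacity_mul_sub (ha.trans hab) hbc hc
  have h0 : (0 : ℝ) ∈ Icc (0 : ℝ) 1 := ⟨le_rfl, zero_le_one⟩
  have h1 : (1 : ℝ) ∈ Icc (0 : ℝ) 1 := ⟨zero_le_one, le_rfl⟩
  simp only [hN'] at h ⊢
  simpa using dichotomy_of_cross (s := Icc 0 1) (t := 1)
    (e₁ := fun σ => bscCapacity (σ * b) - bscCapacity (σ * a))
    (e₂ := fun σ => bscCapacity (σ * c) - bscCapacity (σ * b))
    (fun σ hσ => by simpa using h₁ h0 hσ hσ.1)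
    (fun σ hσ => ⟨by simpa using h₂ h0 hσ hσ.1, h₂ hσ h1 hσ.2⟩)
    (fun σ hσ => by simpa using bscCapacity_mul_sub_cross ha hab hbc hc hσ) (by simpa using h)

theorem bscCapacity_sum_dichotomy {u c : Fin 3 → ℝ} (hu : ∀ i, u i ∈ Icc 0 1)
    (hc : ∑ i, c i = 0) {N : ℝ → ℝ} (hN : ∀ σ, N σ = ∑ i, c i * bscCapacity (σ * u i))
    (h : N 0 ≤ N 1) :
    (∀ σ ∈ Icc (0 : ℝ) 1, N σ ≤ N 1) ∨ (∀ σ ∈ Icc (0 : ℝ) 1, N 0 ≤ N σ) := by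
  set e := Tuple.sort u
  have hmono : Monotone (u ∘ e) := Tuple.monotone_sort u
  refine bscCapacity_three_dichotomy (hu (e 0)).1 (hmono (by decide : (0 : Fin 3) ≤ 1))
    (hmono (by decide : (1 : Fin 3) ≤ 2)) (hu (e 2)).2 (ca := c (e 0)) (cb := c (e 1))
    (cc := c (e 2)) ?_ (fun σ => ?_) h
  · rw [← hc, ← Equiv.sum_comp e c, Fin.sum_univ_three]
  · rw [hN, ← Equiv.sum_comp e, Fin.sum_univ_three]
    rfl

theorem bsc_three_dichotomy_general (α : Fin 3 → ℝ) (hα : ∀ i, α i ∈ Set.Icc (0 : ℝ) 1)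
    (p q : Fin 3 → ℝ)
    (hp1 : ∑ i, p i = 1) (hq1 : ∑ i, q i = 1)
    (D : ℝ → ℝ)
    (hD : D = fun x => ∑ i, (p i - q i) *
      (Real.binEntropy (bconv x (α i)) - Real.binEntropy (α i)))
    (hD2 : 0 ≤ D (1 / 2)) :
    (∀ x ∈ Set.Icc (0 : ℝ) 1, 0 ≤ D x) ∨ (∀ x ∈ Set.Icc (0 : ℝ) 1, D x ≤ D (1 / 2)) := by
  set N : ℝ → ℝ := fun σ => ∑ i, (p i - q i) * bscCapacity (σ * |1 - 2 * α i|)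
  have hDN : ∀ x, D x = N 1 - N |1 - 2 * x| := fun x => by
    simp only [hD, N, binEntropy_bconv_sub_binEntropy, one_mul, mul_sub, Finset.sum_sub_distrib]
  have habs : ∀ x ∈ Icc (0 : ℝ) 1, |1 - 2 * x| ∈ Icc (0 : ℝ) 1 := fun x hx =>
    ⟨abs_nonneg _, abs_le.2 ⟨by linarith [hx.2], by linarith [hx.1]⟩⟩
  have hhalf : D (1 / 2) = N 1 - N 0 := by norm_num [hDN]
  rcases bscCapacity_sum_dichotomy (c := fun i => p i - q i) (N := N) (fun i => habs _ (hα i))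
      (by rw [Finset.sum_sub_distrib, hp1, hq1, sub_self]) (fun _ => rfl)
      (by linarith) with h | h
  · exact Or.inl fun x hx => by linarith [hDN x, h _ (habs x hx)]
  · exact Or.inr fun x hx => by linarith [hDN x, h _ (habs x hx)]

/-- Analytic core of Theorem 5 for the broadcast channel with three binary symmetric channel
state components: the difference `D(x) = I(X;Y₁|S) − I(X;Y₂|S)` (for `X ∼ Bern(x)`) with
`D(1/2) ≥ 0` is either nonnegative on `[0,1]` or maximized at `x = 1/2` on `[0,1]`. -/
theorem bsc_three_dichotomy (α : Fin 3 → ℝ) (hα : ∀ i, α i ∈ Set.Icc (0 : ℝ) 1)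
    (p q : Fin 3 → ℝ) (hp : ∀ i, 0 ≤ p i) (hq : ∀ i, 0 ≤ q i)
    (hp1 : ∑ i, p i = 1) (hq1 : ∑ i, q i = 1)
    (D : ℝ → ℝ)
    (hD : D = fun x => ∑ i, (p i - q i) *
      (Real.binEntropy (bconv x (α i)) - Real.binEntropy (α i)))
    (hD2 : 0 ≤ D (1 / 2)) :
    (∀ x ∈ Set.Icc (0 : ℝ) 1, 0 ≤ D x) ∨ (∀ x ∈ Set.Icc (0 : ℝ) 1, D x ≤ D (1 / 2)) :=
  bsc_three_dichotomy_general α hα p q hp1 hq1 D hD hD2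
end

section
/- Let α : Fin 3 → [0,1] and p, q : Fin 3 → ℝ with p i ≥ 0, q i ≥ 0 for all i and ∑_i p i = ∑_i q i = 1. Define D : ℝ → ℝ by D(x) = ∑_i (p i − q i) · (binEntropy(x ⋆ α i) − binEntropy(α i)). Then for every x ∈ (0,1), D is twice differentiable at x and deriv (deriv D) x = (p 0 − q 0) · ((1−2·α 2)² · (α 0)·(1−α 0) − (1−2·α 0)² · (α 2)·(1−α 2)) / ((x ⋆ α 0)·(1 − x ⋆ α 0)·(x ⋆ α 2)·(1 − x ⋆ α 2)) + (p 1 − q 1) · ((1−2·α 2)² · (α 1)·(1−α 1) − (1−2·α 1)² · (α 2)·(1−α 2)) / ((x ⋆ α 1)·(1 − x ⋆ α 1)·(x ⋆ α 2)·(1 − x ⋆ α 2)). -/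
/-!
Write `c i = p i - q i`, so that `∑ i, c i = 0`. Since `y ↦ y ⋆ a` is affine with slope `1 - 2a`
and `h'' t = -1 / (t (1 - t))`, the chain rule gives
`D'' x = -∑ i, c i (1 - 2 α i)² / ((x ⋆ α i)(1 - x ⋆ α i))`. Eliminating `c 2 = -(c 0 + c 1)`
pairs each of the first two terms with the last one, and each pair collapses to the stated
fraction because `1 - 2 (x ⋆ a) = (1 - 2x)(1 - 2a)` makes the cross numerator independent of `x`.
-/

open Real Set

lemma bconv_mem_Ioo {x a : ℝ} (hx : x ∈ Ioo (0 : ℝ) 1) (ha : a ∈ Icc (0 : ℝ) 1) :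
    bconv x a ∈ Ioo (0 : ℝ) 1 := by
  have hx' : 1 - x ∈ Ioo (0 : ℝ) 1 := ⟨by linarith [hx.2], by linarith [hx.1]⟩
  have h := convex_Ioo (0 : ℝ) 1 hx hx' (sub_nonneg.2 ha.2) ha.1 (sub_add_cancel 1 a)
  simpa only [bconv, smul_eq_mul, mul_comm] using h

lemma hasDerivAt_bconv (a x : ℝ) : HasDerivAt (fun y => bconv y a) (1 - 2 * a) x := by
  have h : (fun y => bconv y a) = fun y => (1 - 2 * a) * y + a := by
    funext y; unfold bconv; ring
  rw [h]
  simpa using ((hasDerivAt_id x).const_mul (1 - 2 * a)).add_const a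

lemma hasDerivAt_deriv_binEntropy {p : ℝ} (hp₀ : p ≠ 0) (hp₁ : p ≠ 1) :
    HasDerivAt (deriv binEntropy) (-1 / (p * (1 - p))) p := by
  have hp₁' : 1 - p ≠ 0 := sub_ne_zero.2 hp₁.symm
  have h : DifferentiableAt ℝ (deriv binEntropy) p := by
    rw [funext deriv_binEntropy]
    exact ((differentiableAt_log hp₁').comp p (by fun_prop)).sub (differentiableAt_log hp₀)
  have h₂ : deriv (deriv binEntropy) p = -1 / (p * (1 - p)) := deriv2_binEntropy
  exact h₂ ▸ h.hasDerivAt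

lemma hasDerivAt_binEntropy_bconv {x a : ℝ} (h₀ : bconv x a ≠ 0) (h₁ : bconv x a ≠ 1) :
    HasDerivAt (fun y => binEntropy (bconv y a)) (deriv binEntropy (bconv x a) * (1 - 2 * a)) x := by
  rw [deriv_binEntropy]
  exact (hasDerivAt_binEntropy h₀ h₁).comp x (hasDerivAt_bconv a x)

lemma hasDerivAt_deriv_binEntropy_bconv {x a : ℝ} (h₀ : bconv x a ≠ 0) (h₁ : bconv x a ≠ 1) :
    HasDerivAt (fun y => deriv binEntropy (bconv y a) * (1 - 2 * a))
      (-(1 - 2 * a) ^ 2 / (bconv x a * (1 - bconv x a))) x :=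
  (((hasDerivAt_deriv_binEntropy h₀ h₁).comp x (hasDerivAt_bconv a x)).mul_const
    (1 - 2 * a)).congr_deriv (by ring)

lemma div_bconv_sub_div_bconv {x a b : ℝ} (ha : bconv x a * (1 - bconv x a) ≠ 0)
    (hb : bconv x b * (1 - bconv x b) ≠ 0) :
    -(1 - 2 * a) ^ 2 / (bconv x a * (1 - bconv x a)) -
        -(1 - 2 * b) ^ 2 / (bconv x b * (1 - bconv x b)) =
      ((1 - 2 * b) ^ 2 * a * (1 - a) - (1 - 2 * a) ^ 2 * b * (1 - b)) /
        (bconv x a * (1 - bconv x a) * bconv x b * (1 - bconv x b)) := by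
  rw [div_sub_div _ _ ha hb, mul_assoc _ (bconv x b)]
  congr 1
  unfold bconv
  ring

lemma Fin.sum_univ_three_mul_of_sum_eq_zero {R : Type*} [CommRing R] {c : Fin 3 → R}
    (hc : ∑ i, c i = 0) (g : Fin 3 → R) :
    ∑ i, c i * g i = c 0 * (g 0 - g 2) + c 1 * (g 1 - g 2) := by
  rw [Fin.sum_univ_three] at hc ⊢
  linear_combination g 2 * hc

theorem bsc_three_second_deriv_general (α : Fin 3 → ℝ) (hα : ∀ i, α i ∈ Set.Icc (0 : ℝ) 1)
    (p q : Fin 3 → ℝ)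
    (hp1 : ∑ i, p i = 1) (hq1 : ∑ i, q i = 1)
    (D : ℝ → ℝ)
    (hD : D = fun x => ∑ i, (p i - q i) *
      (Real.binEntropy (bconv x (α i)) - Real.binEntropy (α i))) :
    ∀ x ∈ Set.Ioo (0 : ℝ) 1,
      DifferentiableAt ℝ D x ∧ DifferentiableAt ℝ (deriv D) x ∧
      deriv (deriv D) x =
        (p 0 - q 0) *
            ((1 - 2 * α 2) ^ 2 * α 0 * (1 - α 0) - (1 - 2 * α 0) ^ 2 * α 2 * (1 - α 2)) /
            (bconv x (α 0) * (1 - bconv x (α 0)) * (bconv x (α 2)) * (1 - bconv x (α 2))) +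
          (p 1 - q 1) *
            ((1 - 2 * α 2) ^ 2 * α 1 * (1 - α 1) - (1 - 2 * α 1) ^ 2 * α 2 * (1 - α 2)) /
            (bconv x (α 1) * (1 - bconv x (α 1)) * (bconv x (α 2)) * (1 - bconv x (α 2))) := by
  intro x hx
  have hmem (y : ℝ) (hy : y ∈ Ioo (0 : ℝ) 1) (i : Fin 3) := bconv_mem_Ioo hy (hα i)
  set D' : ℝ → ℝ := fun y => ∑ i, (p i - q i) * (deriv binEntropy (bconv y (α i)) * (1 - 2 * α i))
  have hD' (y : ℝ) (hy : y ∈ Ioo (0 : ℝ) 1) : HasDerivAt D (D' y) y := by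
    rw [hD]
    exact HasDerivAt.fun_sum fun i _ => ((hasDerivAt_binEntropy_bconv (hmem y hy i).1.ne'
      (hmem y hy i).2.ne).sub_const _).const_mul _
  have hderiv : deriv D =ᶠ[nhds x] D' :=
    Filter.eventually_of_mem (isOpen_Ioo.mem_nhds hx) fun y hy => (hD' y hy).deriv
  have hD'' : HasDerivAt D' (∑ i, (p i - q i) *
      (-(1 - 2 * α i) ^ 2 / (bconv x (α i) * (1 - bconv x (α i))))) x :=
    HasDerivAt.fun_sum fun i _ => (hasDerivAt_deriv_binEntropy_bconv (hmem x hx i).1.ne'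
      (hmem x hx i).2.ne).const_mul _
  refine ⟨(hD' x hx).differentiableAt, hderiv.differentiableAt_iff.2 hD''.differentiableAt, ?_⟩
  have hpq : ∑ i, (p i - q i) = 0 := by rw [Finset.sum_sub_distrib, hp1, hq1, sub_self]
  have hne (i : Fin 3) : bconv x (α i) * (1 - bconv x (α i)) ≠ 0 :=
    mul_ne_zero (hmem x hx i).1.ne' (sub_ne_zero.2 (hmem x hx i).2.ne')
  rw [hderiv.deriv_eq, hD''.deriv, Fin.sum_univ_three_mul_of_sum_eq_zero hpq,
    div_bconv_sub_div_bconv (hne 0) (hne 2), div_bconv_sub_div_bconv (hne 1) (hne 2), mul_div_assoc,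
    mul_div_assoc]

/-- The second-derivative formula for `D(x) = I(X;Y₁|S) − I(X;Y₂|S)` in the proof of
Theorem 5 (broadcast channel with three binary symmetric channel state components). -/
theorem bsc_three_second_deriv (α : Fin 3 → ℝ) (hα : ∀ i, α i ∈ Set.Icc (0 : ℝ) 1)
    (p q : Fin 3 → ℝ) (hp : ∀ i, 0 ≤ p i) (hq : ∀ i, 0 ≤ q i)
    (hp1 : ∑ i, p i = 1) (hq1 : ∑ i, q i = 1)
    (D : ℝ → ℝ)
    (hD : D = fun x => ∑ i, (p i - q i) *
      (Real.binEntropy (bconv x (α i)) - Real.binEntropy (α i))) :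
    ∀ x ∈ Set.Ioo (0 : ℝ) 1,
      DifferentiableAt ℝ D x ∧ DifferentiableAt ℝ (deriv D) x ∧
      deriv (deriv D) x =
        (p 0 - q 0) *
            ((1 - 2 * α 2) ^ 2 * α 0 * (1 - α 0) - (1 - 2 * α 0) ^ 2 * α 2 * (1 - α 2)) /
            (bconv x (α 0) * (1 - bconv x (α 0)) * (bconv x (α 2)) * (1 - bconv x (α 2))) +
          (p 1 - q 1) *
            ((1 - 2 * α 2) ^ 2 * α 1 * (1 - α 1) - (1 - 2 * α 1) ^ 2 * α 2 * (1 - α 2)) /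
            (bconv x (α 1) * (1 - bconv x (α 1)) * (bconv x (α 2)) * (1 - bconv x (α 2))) :=
  bsc_three_second_deriv_general α hα p q hp1 hq1 D hD
end

section
/- Let N₁ > 0, N₂ > 0, θ ∈ [0,1], and a, b, ρ ∈ ℝ with ρ² < 1. Set T = a² + b² + 2abρ. Then θ · log( ((a²(1−ρ²)+N₁)·(b²(1−ρ²)+N₁)) / (N₁·(1−ρ²)·(T+N₁)) ) + (1−θ) · log( ((a²(1−ρ²)+N₂)·(b²(1−ρ²)+N₂)) / (N₂·(1−ρ²)·(T+N₂)) ) ≥ 0. Moreover, if 0 < θ < 1 and N₁ ≠ N₂, then equality holds if and only if ρ = 0 and a·b = 0. -/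
/-!
Each of the two logarithms is `log (P / Q)` with `Q > 0` and
`P - Q = (a b (1 - ρ²) - ρ N)²`, so it is nonnegative and vanishes exactly when
`a b (1 - ρ²) = ρ N`. For `0 < θ < 1` the weighted sum vanishes iff both logarithms do,
and for `N₁ ≠ N₂` the two equations `a b (1 - ρ²) = ρ Nᵢ` force `ρ = 0`, hence `a b = 0`.
-/

open Real

lemma Real.log_div_eq_zero_iff_of_le {x y : ℝ} (hy : 0 < y) (hyx : y ≤ x) :
    log (x / y) = 0 ↔ x = y := by
  have hx : 0 < x := hy.trans_le hyx
  rw [log_div hx.ne' hy.ne', sub_eq_zero, log_injOn_pos.eq_iff hx hy]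

lemma convex_comb_eq_zero_iff {θ x y : ℝ} (hθ₀ : 0 < θ) (hθ₁ : θ < 1)
    (hx : 0 ≤ x) (hy : 0 ≤ y) :
    θ * x + (1 - θ) * y = 0 ↔ x = 0 ∧ y = 0 := by
  rw [add_eq_zero_iff_of_nonneg (by positivity) (mul_nonneg (by linarith) hy),
    mul_eq_zero_iff_left hθ₀.ne', mul_eq_zero_iff_left (by linarith)]

lemma mul_eq_mul_both_iff_of_ne {c s ρ N₁ N₂ : ℝ} (hs : s ≠ 0) (hN : N₁ ≠ N₂) :
    c * s = ρ * N₁ ∧ c * s = ρ * N₂ ↔ ρ = 0 ∧ c = 0 := by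
  constructor
  · rintro ⟨h₁, h₂⟩
    have hρ : ρ = 0 := by
      have : ρ * (N₁ - N₂) = 0 := by linear_combination h₂ - h₁
      exact (mul_eq_zero.mp this).resolve_right (sub_ne_zero.mpr hN)
    subst hρ
    exact ⟨rfl, (mul_eq_zero.mp (by simpa using h₁)).resolve_right hs⟩
  · rintro ⟨rfl, rfl⟩
    simp

noncomputable def dpcLogGap (N a b ρ : ℝ) : ℝ :=
  log ((a ^ 2 * (1 - ρ ^ 2) + N) * (b ^ 2 * (1 - ρ ^ 2) + N) /
    (N * (1 - ρ ^ 2) * (a ^ 2 + b ^ 2 + 2 * a * b * ρ + N)))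

lemma dpc_numerator_sub_denominator (N a b ρ : ℝ) :
    (a ^ 2 * (1 - ρ ^ 2) + N) * (b ^ 2 * (1 - ρ ^ 2) + N) -
      N * (1 - ρ ^ 2) * (a ^ 2 + b ^ 2 + 2 * a * b * ρ + N) =
    (a * b * (1 - ρ ^ 2) - ρ * N) ^ 2 := by
  ring

lemma dpc_denominator_pos {N : ℝ} (a b : ℝ) {ρ : ℝ} (hN : 0 < N) (hρ : ρ ^ 2 < 1) :
    0 < N * (1 - ρ ^ 2) * (a ^ 2 + b ^ 2 + 2 * a * b * ρ + N) := by
  have hs : 0 < 1 - ρ ^ 2 := by linarith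
  -- `a² + b² + 2abρ = (a + bρ)² + b²(1 - ρ²)`
  have hT : 0 ≤ a ^ 2 + b ^ 2 + 2 * a * b * ρ := by
    nlinarith [sq_nonneg (a + b * ρ), mul_nonneg (sq_nonneg b) hs.le]
  have : 0 < a ^ 2 + b ^ 2 + 2 * a * b * ρ + N := by linarith
  positivity

lemma dpc_denominator_le_numerator (N a b ρ : ℝ) :
    N * (1 - ρ ^ 2) * (a ^ 2 + b ^ 2 + 2 * a * b * ρ + N) ≤
      (a ^ 2 * (1 - ρ ^ 2) + N) * (b ^ 2 * (1 - ρ ^ 2) + N) :=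
  sub_nonneg.mp ((dpc_numerator_sub_denominator N a b ρ).symm ▸ sq_nonneg _)

lemma dpcLogGap_nonneg {N : ℝ} (a b : ℝ) {ρ : ℝ} (hN : 0 < N) (hρ : ρ ^ 2 < 1) :
    0 ≤ dpcLogGap N a b ρ :=
  log_nonneg <| (one_le_div (dpc_denominator_pos a b hN hρ)).mpr
    (dpc_denominator_le_numerator N a b ρ)

lemma dpcLogGap_eq_zero_iff {N : ℝ} (a b : ℝ) {ρ : ℝ} (hN : 0 < N) (hρ : ρ ^ 2 < 1) :
    dpcLogGap N a b ρ = 0 ↔ a * b * (1 - ρ ^ 2) = ρ * N := by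
  rw [dpcLogGap, log_div_eq_zero_iff_of_le (dpc_denominator_pos a b hN hρ)
    (dpc_denominator_le_numerator N a b ρ), ← sub_eq_zero,
    dpc_numerator_sub_denominator, sq_eq_zero_iff, sub_eq_zero]

/-- The key inequality (with its equality condition) in the proof that dirty paper coding is
suboptimal for the broadcast channel with two scalar Gaussian channel state components. -/
theorem dpc_key_inequality (N₁ N₂ : ℝ) (hN₁ : 0 < N₁) (hN₂ : 0 < N₂)
    (θ : ℝ) (hθ : θ ∈ Set.Icc (0 : ℝ) 1)
    (a b ρ : ℝ) (hρ : ρ ^ 2 < 1)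
    (T : ℝ) (hT : T = a ^ 2 + b ^ 2 + 2 * a * b * ρ) :
    0 ≤ θ * Real.log ((a ^ 2 * (1 - ρ ^ 2) + N₁) * (b ^ 2 * (1 - ρ ^ 2) + N₁) /
          (N₁ * (1 - ρ ^ 2) * (T + N₁))) +
        (1 - θ) * Real.log ((a ^ 2 * (1 - ρ ^ 2) + N₂) * (b ^ 2 * (1 - ρ ^ 2) + N₂) /
          (N₂ * (1 - ρ ^ 2) * (T + N₂))) ∧
      (0 < θ → θ < 1 → N₁ ≠ N₂ →
        (θ * Real.log ((a ^ 2 * (1 - ρ ^ 2) + N₁) * (b ^ 2 * (1 - ρ ^ 2) + N₁) /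
            (N₁ * (1 - ρ ^ 2) * (T + N₁))) +
          (1 - θ) * Real.log ((a ^ 2 * (1 - ρ ^ 2) + N₂) * (b ^ 2 * (1 - ρ ^ 2) + N₂) /
            (N₂ * (1 - ρ ^ 2) * (T + N₂))) = 0 ↔ ρ = 0 ∧ a * b = 0)) := by
  subst hT
  change 0 ≤ θ * dpcLogGap N₁ a b ρ + (1 - θ) * dpcLogGap N₂ a b ρ ∧
    (0 < θ → θ < 1 → N₁ ≠ N₂ →
      (θ * dpcLogGap N₁ a b ρ + (1 - θ) * dpcLogGap N₂ a b ρ = 0 ↔ ρ = 0 ∧ a * b = 0))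
  have h₁ := dpcLogGap_nonneg a b hN₁ hρ
  have h₂ := dpcLogGap_nonneg a b hN₂ hρ
  refine ⟨add_nonneg (mul_nonneg hθ.1 h₁) (mul_nonneg (sub_nonneg.mpr hθ.2) h₂),
    fun hθ₀ hθ₁ hN => ?_⟩
  rw [convex_comb_eq_zero_iff hθ₀ hθ₁ h₁ h₂, dpcLogGap_eq_zero_iff a b hN₁ hρ,
    dpcLogGap_eq_zero_iff a b hN₂ hρ]
  exact mul_eq_mul_both_iff_of_ne (by linarith) hN
end

section
/- Let U, A, B be nonempty finite types and let r be a joint pmf on U × A × B. Denote by F₁ the A-coordinate and by F₂ the B-coordinate. Let p₁, p₂ ∈ [0,1] and λ ∈ ℝ satisfy λ ≤ 1 and 1 − p₁ ≤ λ·(1 − p₂). Then (λ·(1−p₂) − (1−p₁)) · H(F₂|U) + (λ·p₂ − p₁) · H(F₁|U) ≤ (λ·(1−p₂) − (1−p₁)) · H(F₂|F₁), where H(F₂|U) is the conditional entropy computed from the (U,B)-marginal of r, H(F₁|U) from the (U,A)-marginal of r, and H(F₂|F₁) from the (A,B)-marginal of r. -/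
/-! Two weighted (in)equalities imply the theorem: `H(F₂|U) ≤ H(F₂|U,F₁) ≤ H(F₂|F₁)` carries
the coefficient `λp̄₂ − p̄₁ ≥ 0`, and the remainder is `(λ − 1) H(F₁|U) ≤ 0`. The key step,
conditioning reduces entropy, is the superadditivity of `q ↦ (∑ q) · H(q / ∑ q)` on
nonnegative vectors, which is a rearrangement of the log-sum inequality. -/

open Real Finset

lemma mul_log_div_le_mul_log_add {x y t : ℝ} (ht : 0 < t) (hx : 0 ≤ x) (hxy : x ≤ y) :
    x * log (y / x) ≤ x * log t + (y / t - x) := by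
  rcases hx.eq_or_lt with rfl | hx
  · simp only [zero_mul, zero_add, sub_zero]
    exact div_nonneg (hx.trans hxy) ht.le
  have hy : 0 < y := hx.trans_le hxy
  have hlog : log (y / x) - log t ≤ y / (x * t) - 1 := by
    rw [← log_div (by positivity) ht.ne', div_div]
    exact log_le_sub_one_of_pos (by positivity)
  calc x * log (y / x) = x * log t + x * (log (y / x) - log t) := by ring
    _ ≤ x * log t + x * (y / (x * t) - 1) := by gcongr
    _ = x * log t + (y / t - x) := by field_simp

lemma sum_mul_log_div_le {ι : Type*} (s : Finset ι) {x y : ι → ℝ}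
    (hx : ∀ i ∈ s, 0 ≤ x i) (hxy : ∀ i ∈ s, x i ≤ y i) :
    ∑ i ∈ s, x i * log (y i / x i) ≤
      (∑ i ∈ s, x i) * log ((∑ i ∈ s, y i) / ∑ i ∈ s, x i) := by
  set X := ∑ i ∈ s, x i
  set Y := ∑ i ∈ s, y i
  rcases (show 0 ≤ X from sum_nonneg hx).eq_or_lt with hX | hX
  · have hx0 : ∀ i ∈ s, x i = 0 := (sum_eq_zero_iff_of_nonneg hx).1 hX.symm
    rw [← hX, zero_mul]
    exact (sum_eq_zero fun i hi => by rw [hx0 i hi, zero_mul]).le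
  have hY : 0 < Y := hX.trans_le (sum_le_sum hxy)
  calc ∑ i ∈ s, x i * log (y i / x i)
      ≤ ∑ i ∈ s, (x i * log (Y / X) + (y i / (Y / X) - x i)) :=
        sum_le_sum fun i hi => mul_log_div_le_mul_log_add (by positivity) (hx i hi) (hxy i hi)
    _ = X * log (Y / X) + (Y / (Y / X) - X) := by
        rw [sum_add_distrib, sum_sub_distrib, ← sum_mul, ← sum_div]
    _ = X * log (Y / X) := by field_simp; ring

section Entropy

variable {α β γ : Type*} [Fintype α] [Fintype β] [Fintype γ]

/-- `weightedEntropy q = (∑ q) · H(q / ∑ q)` for `q ≥ 0`, by `Real.negMulLog_mul`. -/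
noncomputable def weightedEntropy (q : β → ℝ) : ℝ :=
  entropy q - negMulLog (∑ b, q b)

lemma weightedEntropy_eq_sum_mul_log {q : β → ℝ} (hq : ∀ b, 0 ≤ q b) :
    weightedEntropy q = ∑ b, q b * log ((∑ b', q b') / q b) := by
  rw [weightedEntropy, entropy, negMulLog, neg_mul, sub_neg_eq_add, sum_mul,
    ← sum_add_distrib]
  refine sum_congr rfl fun b _ => ?_
  rcases (hq b).eq_or_lt with hb | hb
  · simp [← hb]
  · rw [log_div (hb.trans_le (single_le_sum (fun b _ => hq b) (mem_univ b))).ne' hb.ne',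
      negMulLog]
    ring

lemma weightedEntropy_nonneg {q : β → ℝ} (hq : ∀ b, 0 ≤ q b) : 0 ≤ weightedEntropy q := by
  rw [weightedEntropy_eq_sum_mul_log hq]
  refine sum_nonneg fun b _ => ?_
  rcases (hq b).eq_or_lt with hb | hb
  · simp [← hb]
  · exact mul_nonneg hb.le
      (log_nonneg ((one_le_div hb).2 (single_le_sum (fun b _ => hq b) (mem_univ b))))

lemma sum_weightedEntropy_le {q : γ → β → ℝ} (hq : ∀ c b, 0 ≤ q c b) :
    ∑ c, weightedEntropy (q c) ≤ weightedEntropy (fun b => ∑ c, q c b) := by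
  simp only [weightedEntropy_eq_sum_mul_log (hq _),
    weightedEntropy_eq_sum_mul_log fun b => sum_nonneg fun c _ => hq c b]
  rw [sum_comm (s := univ) (t := univ) (f := fun c b => q c b * log ((∑ b', q c b') / q c b))]
  refine sum_le_sum fun b _ => ?_
  rw [sum_comm (s := univ) (t := univ) (f := fun b c => q c b)]
  exact sum_mul_log_div_le _ (fun c _ => hq c b)
    (fun c _ => single_le_sum (fun b' _ => hq c b') (mem_univ b))

lemma entropy_comp_equiv_s16 (e : α ≃ β) (w : β → ℝ) : entropy (w ∘ e) = entropy w :=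
  e.sum_comp (fun b => negMulLog (w b))

lemma entropy_eq_entropy_fst_add (w : α × β → ℝ) :
    entropy w = entropy (fun a => ∑ b, w (a, b)) + ∑ a, weightedEntropy (fun b => w (a, b)) := by
  simp only [weightedEntropy, entropy, Fintype.sum_prod_type, sum_sub_distrib]
  ring

lemma entropy_fst_le_entropy (w : α × β → ℝ) (hw : ∀ x, 0 ≤ w x) :
    entropy (fun a => ∑ b, w (a, b)) ≤ entropy w := by
  rw [entropy_eq_entropy_fst_add w, le_add_iff_nonneg_right]
  exact sum_nonneg fun a _ => weightedEntropy_nonneg fun b => hw (a, b)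

/-- Conditioning reduces entropy: `H(B | C, A) ≤ H(B | A)`. -/
lemma entropy_sub_entropy_le_of_conditioning {w : γ × α × β → ℝ} (hw : ∀ x, 0 ≤ w x) :
    entropy w - entropy (fun ca : γ × α => ∑ b, w (ca.1, ca.2, b)) ≤
      entropy (fun ab : α × β => ∑ c, w (c, ab.1, ab.2)) -
        entropy (fun a : α => ∑ c, ∑ b, w (c, a, b)) := by
  rw [← entropy_comp_equiv_s16 (Equiv.prodAssoc γ α β) w,
    entropy_eq_entropy_fst_add (w ∘ Equiv.prodAssoc γ α β),
    entropy_eq_entropy_fst_add (fun ab : α × β => ∑ c, w (c, ab.1, ab.2))]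
  have hA : (fun a => ∑ b, ∑ c, w (c, a, b)) = fun a => ∑ c, ∑ b, w (c, a, b) :=
    funext fun a => sum_comm
  simp only [Function.comp_apply, Equiv.prodAssoc_apply, hA, add_sub_cancel_left]
  rw [Fintype.sum_prod_type, sum_comm]
  exact sum_le_sum fun a _ => sum_weightedEntropy_le fun c b => hw (c, a, b)

end Entropy

theorem aux_entropy_inequality_general {U A B : Type*} [Fintype U] [Fintype A] [Fintype B]
    (r : U × A × B → ℝ) (hr : IsPMF r)
    (p₁ p₂ : ℝ)
    (lam : ℝ) (hlam1 : lam ≤ 1) (hlam2 : 1 - p₁ ≤ lam * (1 - p₂)) :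
    (lam * (1 - p₂) - (1 - p₁)) *
        (entropy (fun ub : U × B => ∑ a, r (ub.1, a, ub.2)) -
          entropy (fun u : U => ∑ a, ∑ b, r (u, a, b))) +
      (lam * p₂ - p₁) *
        (entropy (fun ua : U × A => ∑ b, r (ua.1, ua.2, b)) -
          entropy (fun u : U => ∑ a, ∑ b, r (u, a, b))) ≤
    (lam * (1 - p₂) - (1 - p₁)) *
        (entropy (fun ab : A × B => ∑ u, r (u, ab.1, ab.2)) -
          entropy (fun a : A => ∑ u, ∑ b, r (u, a, b))) := by
  have hr0 := hr.1
  have hU_le_UA : entropy (fun u : U => ∑ a, ∑ b, r (u, a, b)) ≤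
      entropy (fun ua : U × A => ∑ b, r (ua.1, ua.2, b)) :=
    entropy_fst_le_entropy (fun ua => ∑ b, r (ua.1, ua.2, b)) fun _ =>
      sum_nonneg fun _ _ => hr0 _
  have hUB_le_UAB : entropy (fun ub : U × B => ∑ a, r (ub.1, a, ub.2)) ≤ entropy r := by
    let e : (U × B) × A ≃ U × A × B :=
      (Equiv.prodAssoc U B A).trans ((Equiv.refl U).prodCongr (Equiv.prodComm B A))
    rw [← entropy_comp_equiv_s16 e r]
    exact entropy_fst_le_entropy (r ∘ e) fun _ => hr0 _
  have hcond := entropy_sub_entropy_le_of_conditioning hr0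
  have hc : 0 ≤ lam * (1 - p₂) - (1 - p₁) := by linarith
  have hF₂ := mul_le_mul_of_nonneg_left (sub_le_sub_right hUB_le_UAB _ |>.trans hcond) hc
  have hF₁ := mul_nonpos_of_nonpos_of_nonneg (sub_nonpos.2 hlam1) (sub_nonneg.2 hU_le_UA)
  linear_combination hF₂ + hF₁

/-- Key entropy inequality in the converse proof of Theorem 1 (capacity region of the
broadcast channel with two deterministic channel state components): for `λ ≤ 1` with
`p̄₁ ≤ λ p̄₂`, the weighted combination `(λp̄₂ − p̄₁)H(F₂|U) + (λp₂ − p₁)H(F₁|U)` is at most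
`(λp̄₂ − p̄₁)H(F₂|F₁)`, where `F₁, F₂` are the `A`- and `B`-coordinates of a joint pmf `r`
on `U × A × B`. -/
theorem aux_entropy_inequality {U A B : Type*} [Fintype U] [Fintype A] [Fintype B]
    [Nonempty U] [Nonempty A] [Nonempty B]
    (r : U × A × B → ℝ) (hr : IsPMF r)
    (p₁ p₂ : ℝ) (hp₁0 : 0 ≤ p₁) (hp₁1 : p₁ ≤ 1) (hp₂0 : 0 ≤ p₂) (hp₂1 : p₂ ≤ 1)
    (lam : ℝ) (hlam1 : lam ≤ 1) (hlam2 : 1 - p₁ ≤ lam * (1 - p₂)) :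
    (lam * (1 - p₂) - (1 - p₁)) *
        (entropy (fun ub : U × B => ∑ a, r (ub.1, a, ub.2)) -
          entropy (fun u : U => ∑ a, ∑ b, r (u, a, b))) +
      (lam * p₂ - p₁) *
        (entropy (fun ua : U × A => ∑ b, r (ua.1, ua.2, b)) -
          entropy (fun u : U => ∑ a, ∑ b, r (u, a, b))) ≤
    (lam * (1 - p₂) - (1 - p₁)) *
        (entropy (fun ab : A × B => ∑ u, r (u, ab.1, ab.2)) -
          entropy (fun a : A => ∑ u, ∑ b, r (u, a, b))) :=
  aux_entropy_inequality_general r hr p₁ p₂ lam hlam1 hlam2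
end
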